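/- arXiv:1406.4649 — 4 statements merged into one kernel-verified Lean document; each statement's English description precedes it below -/
import Mathlib

section
/- Let (X, dist) be a metric space and (μ_t)_{t>0} a family of Borel probability measures on X satisfying the large deviation upper bound with rate function I, where I : X → [0,∞] is lower semicontinuous with compact sublevel sets. Let Φ : X → ℝ be bounded and continuous and let F ⊆ X be closed. Then limsup_{t→0⁺} t · log ∫_F exp(−Φ(x)/t) dμ_t(x) ≤ −inf_{x ∈ F} (Φ(x) + I(x)). -/
open MeasureTheory Filter Topology
open scoped ENNReal

/-! Slice `F` into the finitely many closed pieces `Cⱼ = F ∩ Φ⁻¹[aⱼ, aⱼ + δ]`. On `Cⱼ` the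
integrand is at most `exp (-aⱼ / t)`, so the integral is at most `∑ⱼ exp (-aⱼ / t) μₜ(Cⱼ)`. On the
scale `t log`, a finite sum grows like its largest term, and the upper bound applied to `Cⱼ` gives
the rate `-aⱼ - inf_{Cⱼ} I ≤ δ - inf_F (Φ + I)`, for every `δ > 0`. -/

noncomputable def expRate (u : ℝ → ℝ≥0∞) : EReal :=
  limsup (fun t : ℝ => (t : EReal) * ENNReal.log (u t)) (𝓝[>] 0)

lemma expRate_mono {u v : ℝ → ℝ≥0∞} (h : ∀ᶠ t : ℝ in 𝓝[>] 0, u t ≤ v t) :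
    expRate u ≤ expRate v :=
  limsup_le_limsup <| by
    filter_upwards [h, self_mem_nhdsWithin] with t huv (ht : 0 < t)
    exact mul_le_mul_of_nonneg_left (ENNReal.log_monotone huv) (by exact_mod_cast ht.le)

lemma expRate_max (u v : ℝ → ℝ≥0∞) :
    expRate (fun t => max (u t) (v t)) = max (expRate u) (expRate v) := by
  have hmax : ∀ᶠ t : ℝ in 𝓝[>] 0, (t : EReal) * ENNReal.log (max (u t) (v t))
      = max ((t : EReal) * ENNReal.log (u t)) ((t : EReal) * ENNReal.log (v t)) := by
    filter_upwards [self_mem_nhdsWithin] with t (ht : 0 < t)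
    have hmono : Monotone fun s : EReal => (t : EReal) * s :=
      fun _ _ hab => mul_le_mul_of_nonneg_left hab (by exact_mod_cast ht.le)
    rw [ENNReal.log_monotone.map_max, hmono.map_max]
  rw [expRate, limsup_congr hmax, limsup_max, expRate, expRate]

lemma expRate_mul_le {g u : ℝ → ℝ≥0∞} {c : ℝ}
    (hg : Tendsto (fun t : ℝ => (t : EReal) * ENNReal.log (g t)) (𝓝[>] 0) (𝓝 c)) :
    expRate (fun t => g t * u t) ≤ c + expRate u := by
  have hsplit : ∀ᶠ t : ℝ in 𝓝[>] 0, (t : EReal) * ENNReal.log (g t * u t)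
      = (t : EReal) * ENNReal.log (g t) + (t : EReal) * ENNReal.log (u t) := by
    filter_upwards [self_mem_nhdsWithin] with t (ht : 0 < t)
    rw [ENNReal.log_mul_add,
      EReal.left_distrib_of_nonneg_of_ne_top (by exact_mod_cast ht.le) (EReal.coe_ne_top t)]
  rw [expRate, limsup_congr hsplit, ← hg.limsup_eq]
  exact EReal.limsup_add_le (.inl (by simp [hg.limsup_eq])) (.inl (by simp [hg.limsup_eq]))

lemma tendsto_mul_log_const {a : ℝ≥0∞} (ha₀ : a ≠ 0) (ha : a ≠ ∞) :
    Tendsto (fun t : ℝ => (t : EReal) * ENNReal.log a) (𝓝[>] 0) (𝓝 0) := by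
  rw [ENNReal.log_pos_real ha₀ ha]
  have h : Tendsto (fun t : ℝ => t * Real.log a.toReal) (𝓝[>] 0) (𝓝 0) := by
    simpa using ((continuous_mul_const _).tendsto (0 : ℝ)).mono_left nhdsWithin_le_nhds
  simpa [EReal.coe_mul] using EReal.tendsto_coe.2 h

lemma expRate_add_le (u v : ℝ → ℝ≥0∞) :
    expRate (fun t => u t + v t) ≤ max (expRate u) (expRate v) :=
  calc expRate (fun t => u t + v t)
      ≤ expRate (fun t => 2 * max (u t) (v t)) :=
        expRate_mono <| .of_forall fun t => by
          rw [two_mul]; exact add_le_add (le_max_left _ _) (le_max_right _ _)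
    _ ≤ ((0 : ℝ) : EReal) + expRate (fun t => max (u t) (v t)) :=
        expRate_mul_le (g := fun _ => 2) (tendsto_mul_log_const two_ne_zero ENNReal.ofNat_ne_top)
    _ = max (expRate u) (expRate v) := by rw [EReal.coe_zero, zero_add, expRate_max]

lemma expRate_finset_sum_le {ι : Type*} (s : Finset ι) (g : ι → ℝ → ℝ≥0∞) :
    expRate (fun t => ∑ i ∈ s, g i t) ≤ s.sup fun i => expRate (g i) := by
  induction s using Finset.cons_induction with
  | empty =>
    simp only [Finset.sum_empty, Finset.sup_empty]
    refine limsup_le_of_le (by isBoundedDefault) ?_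
    filter_upwards [self_mem_nhdsWithin] with t (ht : 0 < t)
    rw [ENNReal.log_zero, EReal.coe_mul_bot_of_pos ht]
  | cons i s hi ih =>
    simp only [Finset.sum_cons, Finset.sup_cons]
    exact (expRate_add_le _ _).trans (max_le_max le_rfl ih)

lemma expRate_ofReal_exp_div_mul_le (c : ℝ) (u : ℝ → ℝ≥0∞) :
    expRate (fun t => ENNReal.ofReal (Real.exp (c / t)) * u t) ≤ c + expRate u :=
  expRate_mul_le <| tendsto_const_nhds.congr' <| by
    filter_upwards [self_mem_nhdsWithin] with t (ht : 0 < t)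
    rw [ENNReal.log_ofReal_of_pos (Real.exp_pos _), Real.log_exp, ← EReal.coe_mul,
      mul_div_cancel₀ _ ht.ne']

lemma exists_Icc_subset_biUnion_Icc (a b : ℝ) {δ : ℝ} (hδ : 0 < δ) :
    ∃ N : ℕ, Set.Icc a b ⊆ ⋃ j ∈ Finset.range N, Set.Icc (a + j * δ) (a + j * δ + δ) := by
  refine ⟨⌊(b - a) / δ⌋₊ + 1, fun y ⟨hay, hyb⟩ => ?_⟩
  set j := ⌊(y - a) / δ⌋₊
  have hj_le : j * δ ≤ y - a :=
    (le_div_iff₀ hδ).1 (Nat.floor_le (div_nonneg (sub_nonneg.2 hay) hδ.le))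
  have hj_lt : y - a < (j + 1) * δ := (div_lt_iff₀ hδ).1 (Nat.lt_floor_add_one _)
  have hjN : j < ⌊(b - a) / δ⌋₊ + 1 :=
    Nat.lt_succ_of_le (Nat.floor_le_floor (by gcongr))
  exact Set.mem_biUnion (Finset.mem_range.2 hjN) ⟨by linarith, by linarith⟩

lemma setLIntegral_le_sum_mul_of_subset_biUnion {X ι : Type*} [MeasurableSpace X] {ν : Measure X}
    {F : Set X} {s : Finset ι} {C : ι → Set X} (hF : F ⊆ ⋃ i ∈ s, C i) {f : X → ℝ≥0∞}
    {c : ι → ℝ≥0∞} (hfc : ∀ i ∈ s, ∀ x ∈ C i, f x ≤ c i) :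
    ∫⁻ x in F, f x ∂ν ≤ ∑ i ∈ s, c i * ν (C i) :=
  calc ∫⁻ x in F, f x ∂ν
      ≤ ∫⁻ x, f x ∂(Measure.sum fun i : (s : Set ι) => ν.restrict (C i)) :=
        lintegral_mono' ((Measure.restrict_mono_set ν hF).trans
          (by simpa using Measure.restrict_biUnion_le (μ := ν) (s := C) s.countable_toSet)) le_rfl
    _ = ∑ i ∈ s, ∫⁻ x in C i, f x ∂ν := by
        rw [lintegral_sum_measure]; exact Finset.tsum_subtype s fun i => ∫⁻ x in C i, f x ∂ν
    _ ≤ ∑ i ∈ s, c i * ν (C i) := Finset.sum_le_sum fun i hi =>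
        (setLIntegral_mono measurable_const (hfc i hi)).trans_eq (setLIntegral_const _ _)

lemma coe_neg_add_neg_iInf_le {X : Type*} {C F : Set X} {Φ : X → ℝ} {g : X → EReal} {a δ r : ℝ}
    (hCF : C ⊆ F) (hΦ : ∀ x ∈ C, Φ x ≤ a + δ)
    (hr : (r : EReal) < ⨅ x ∈ F, ((Φ x : EReal) + g x)) :
    ((-a : ℝ) : EReal) + -(⨅ x ∈ C, g x) ≤ ((δ - r : ℝ) : EReal) := by
  have hg : ((r - a - δ : ℝ) : EReal) ≤ ⨅ x ∈ C, g x := by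
    refine le_iInf₂ fun x hx => ?_
    have hlt : (r : EReal) < ((a + δ : ℝ) : EReal) + g x :=
      hr.trans_le ((iInf₂_le x (hCF hx)).trans (by gcongr; exact_mod_cast hΦ x hx))
    generalize g x = y at hlt ⊢
    induction y with
    | bot => simp at hlt
    | coe y => norm_cast at hlt ⊢; linarith
    | top => exact le_top
  calc ((-a : ℝ) : EReal) + -(⨅ x ∈ C, g x)
      ≤ ((-a : ℝ) : EReal) + ((a + δ - r : ℝ) : EReal) := by
        gcongr
        rw [EReal.neg_le, ← EReal.coe_neg]
        convert hg using 2; ring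
    _ = ((δ - r : ℝ) : EReal) := by norm_cast; ring

theorem varadhan_upper_bound_general {X : Type*} [MetricSpace X] [MeasurableSpace X]
    (μ : ℝ → Measure X) (I : X → ℝ≥0∞)
    (hupper : ∀ C : Set X, IsClosed C →
      Filter.limsup (fun t : ℝ => (t : EReal) * ENNReal.log (μ t C))
          (nhdsWithin 0 (Set.Ioi 0))
        ≤ -(⨅ x ∈ C, (I x : EReal)))
    (Φ : X → ℝ) (hΦcont : Continuous Φ) (hΦbdd : ∃ M : ℝ, ∀ x, |Φ x| ≤ M)
    (F : Set X) (hF : IsClosed F) :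
    Filter.limsup (fun t : ℝ =>
        (t : EReal) * ENNReal.log (∫⁻ x in F, ENNReal.ofReal (Real.exp (-Φ x / t)) ∂ (μ t)))
        (nhdsWithin 0 (Set.Ioi 0))
      ≤ -(⨅ x ∈ F, ((Φ x : EReal) + (I x : EReal))) := by
  obtain ⟨M, hM⟩ := hΦbdd
  change expRate _ ≤ _
  rw [EReal.le_neg]
  refine EReal.ge_of_forall_gt_iff_ge.1 fun r hr => ?_
  obtain ⟨r', hrr', hr'⟩ := EReal.lt_iff_exists_real_btwn.1 hr
  have hδ : 0 < r' - r := sub_pos.2 (by exact_mod_cast hrr')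
  obtain ⟨N, hN⟩ := exists_Icc_subset_biUnion_Icc (-M) M hδ
  set a : ℕ → ℝ := fun j => -M + j * (r' - r)
  set C : ℕ → Set X := fun j => F ∩ Φ ⁻¹' Set.Icc (a j) (a j + (r' - r))
  have hcover : F ⊆ ⋃ j ∈ Finset.range N, C j := fun x hx => by
    obtain ⟨j, hj, hΦx⟩ := Set.mem_iUnion₂.1 (hN (abs_le.1 (hM x)))
    exact Set.mem_biUnion hj ⟨hx, hΦx⟩
  rw [EReal.le_neg, ← EReal.coe_neg, show -r = (r' - r) - r' by ring]
  calc expRate (fun t => ∫⁻ x in F, ENNReal.ofReal (Real.exp (-Φ x / t)) ∂μ t)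
      ≤ expRate fun t => ∑ j ∈ Finset.range N, ENNReal.ofReal (Real.exp (-a j / t)) * μ t (C j) :=
        expRate_mono <| by
          filter_upwards [self_mem_nhdsWithin] with t (ht : 0 < t)
          refine setLIntegral_le_sum_mul_of_subset_biUnion hcover fun j _ x hx => ?_
          gcongr; exact hx.2.1
    _ ≤ (Finset.range N).sup fun j =>
          expRate fun t => ENNReal.ofReal (Real.exp (-a j / t)) * μ t (C j) :=
        expRate_finset_sum_le _ _
    _ ≤ (((r' - r) - r' : ℝ) : EReal) := Finset.sup_le fun j _ =>
        (expRate_ofReal_exp_div_mul_le _ _).trans <|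
          (add_le_add_right (hupper (C j) (hF.inter (isClosed_Icc.preimage hΦcont))) _).trans <|
            coe_neg_add_neg_iInf_le Set.inter_subset_left (fun x hx => hx.2.2) hr'

/-- Varadhan upper bound: if `(μ_t)` satisfies the large deviation upper bound with a good
rate function `I`, `Φ` is bounded continuous and `F` is closed, then
`limsup_{t→0⁺} t log ∫_F exp(−Φ/t) dμ_t ≤ −inf_F (Φ + I)`. -/
theorem varadhan_upper_bound {X : Type*} [MetricSpace X] [MeasurableSpace X] [BorelSpace X]
    (μ : ℝ → Measure X) (hprob : ∀ t > (0:ℝ), IsProbabilityMeasure (μ t))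
    (I : X → ℝ≥0∞) (hlsc : LowerSemicontinuous I)
    (hcomp : ∀ c : ℝ≥0∞, c ≠ ⊤ → IsCompact {x | I x ≤ c})
    (hupper : ∀ C : Set X, IsClosed C →
      Filter.limsup (fun t : ℝ => (t : EReal) * ENNReal.log (μ t C))
          (nhdsWithin 0 (Set.Ioi 0))
        ≤ -(⨅ x ∈ C, (I x : EReal)))
    (Φ : X → ℝ) (hΦcont : Continuous Φ) (hΦbdd : ∃ M : ℝ, ∀ x, |Φ x| ≤ M)
    (F : Set X) (hF : IsClosed F) :
    Filter.limsup (fun t : ℝ =>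
        (t : EReal) * ENNReal.log (∫⁻ x in F, ENNReal.ofReal (Real.exp (-Φ x / t)) ∂ (μ t)))
        (nhdsWithin 0 (Set.Ioi 0))
      ≤ -(⨅ x ∈ F, ((Φ x : EReal) + (I x : EReal))) :=
  varadhan_upper_bound_general μ I hupper Φ hΦcont hΦbdd F hF
end

section
/- Let (X, dist) be a metric space and (μ_t)_{t>0} a family of Borel probability measures on X satisfying the large deviation lower bound with rate function I : X → [0,∞]. Let Φ : X → ℝ be bounded and continuous and let G ⊆ X be open. Then liminf_{t→0⁺} t · log ∫_G exp(−Φ(x)/t) dμ_t(x) ≥ −inf_{x ∈ G} (Φ(x) + I(x)). -/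
/-! The integrand is at least `exp(-c/t)` on the open set `U = G ∩ {Φ < c}`, so
`t log ∫_G exp(-Φ/t) dμ_t ≥ -c + t log μ_t(U)`, and the large deviation lower bound for `U`
gives `liminf ≥ -c - inf_U I ≥ -c - I x₀` for every `x₀ ∈ G` and every `c > Φ x₀`. -/

open MeasureTheory Filter Topology
open scoped ENNReal

section TiltedIntegral

variable {X : Type*} [MeasurableSpace X]

lemma const_mul_measure_le_setLIntegral {μ : Measure X} {f : X → ℝ≥0∞} (hf : Measurable f)
    {s t : Set X} (hst : s ⊆ t) {c : ℝ≥0∞} (hc : ∀ x ∈ s, c ≤ f x) :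
    c * μ s ≤ ∫⁻ x in t, f x ∂μ :=
  calc c * μ s = ∫⁻ _ in s, c ∂μ := (setLIntegral_const s c).symm
    _ ≤ ∫⁻ x in s, f x ∂μ := setLIntegral_mono hf hc
    _ ≤ ∫⁻ x in t, f x ∂μ := lintegral_mono_set hst

variable {Φ : X → ℝ} {U G : Set X} {c : ℝ}

lemma neg_add_mul_log_measure_le_mul_log_setLIntegral {μ : Measure X} (hΦ : Measurable Φ)
    (hUG : U ⊆ G) (hc : ∀ x ∈ U, Φ x ≤ c) {t : ℝ} (ht : 0 < t) :
    -(c : EReal) + t * ENNReal.log (μ U) ≤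
      t * ENNReal.log (∫⁻ x in G, ENNReal.ofReal (Real.exp (-Φ x / t)) ∂μ) := by
  have hbound : ENNReal.ofReal (Real.exp (-c / t)) * μ U ≤
      ∫⁻ x in G, ENNReal.ofReal (Real.exp (-Φ x / t)) ∂μ :=
    const_mul_measure_le_setLIntegral (by fun_prop) hUG fun x hx =>
      ENNReal.ofReal_le_ofReal <| Real.exp_le_exp.2 <|
        div_le_div_of_nonneg_right (neg_le_neg (hc x hx)) ht.le
  calc -(c : EReal) + t * ENNReal.log (μ U)
      = t * ENNReal.log (ENNReal.ofReal (Real.exp (-c / t)) * μ U) := by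
        rw [ENNReal.log_mul_add, ENNReal.log_ofReal_of_pos (Real.exp_pos _), Real.log_exp,
          EReal.left_distrib_of_nonneg_of_ne_top (EReal.coe_nonneg.2 ht.le) (EReal.coe_ne_top t),
          ← EReal.coe_mul, mul_div_cancel₀ _ ht.ne', EReal.coe_neg]
    _ ≤ t * ENNReal.log (∫⁻ x in G, ENNReal.ofReal (Real.exp (-Φ x / t)) ∂μ) := by
        gcongr

lemma neg_add_liminf_mul_log_measure_le {μ : ℝ → Measure X} (hΦ : Measurable Φ)
    (hUG : U ⊆ G) (hc : ∀ x ∈ U, Φ x ≤ c) :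
    -(c : EReal) + liminf (fun t : ℝ => (t : EReal) * ENNReal.log (μ t U)) (𝓝[>] 0) ≤
      liminf (fun t : ℝ => (t : EReal) *
        ENNReal.log (∫⁻ x in G, ENNReal.ofReal (Real.exp (-Φ x / t)) ∂μ t)) (𝓝[>] 0) :=
  calc -(c : EReal) + liminf (fun t : ℝ => (t : EReal) * ENNReal.log (μ t U)) (𝓝[>] 0)
      = liminf (fun _ => -(c : EReal)) (𝓝[>] 0) +
          liminf (fun t : ℝ => (t : EReal) * ENNReal.log (μ t U)) (𝓝[>] 0) := by
        rw [liminf_const]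
    _ ≤ liminf (fun t : ℝ => -(c : EReal) + t * ENNReal.log (μ t U)) (𝓝[>] 0) :=
        EReal.le_liminf_add
    _ ≤ _ := liminf_le_liminf <| eventually_mem_nhdsWithin.mono fun _ ht =>
        neg_add_mul_log_measure_le_mul_log_setLIntegral hΦ hUG hc ht

end TiltedIntegral

theorem varadhan_lower_bound_general {X : Type*} [MetricSpace X] [MeasurableSpace X] [BorelSpace X]
    (μ : ℝ → Measure X)
    (I : X → ℝ≥0∞)
    (hlower : ∀ G : Set X, IsOpen G →
      -(⨅ x ∈ G, (I x : EReal)) ≤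
        Filter.liminf (fun t : ℝ => (t : EReal) * ENNReal.log (μ t G))
          (nhdsWithin 0 (Set.Ioi 0)))
    (Φ : X → ℝ) (hΦcont : Continuous Φ)
    (G : Set X) (hG : IsOpen G) :
    -(⨅ x ∈ G, ((Φ x : EReal) + (I x : EReal))) ≤
      Filter.liminf (fun t : ℝ =>
        (t : EReal) * ENNReal.log (∫⁻ x in G, ENNReal.ofReal (Real.exp (-Φ x / t)) ∂ (μ t)))
        (nhdsWithin 0 (Set.Ioi 0)) := by
  refine EReal.neg_le.mpr (le_iInf₂ fun x₀ hx₀ => EReal.neg_le.mp ?_)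
  rw [EReal.neg_add (.inl (EReal.coe_ne_bot _)) (.inl (EReal.coe_ne_top _)), sub_eq_add_neg]
  refine EReal.add_le_of_forall_lt fun a ha b hb => ?_
  obtain ⟨c, hΦc, hca⟩ := EReal.exists_between_coe_real (EReal.lt_neg_of_lt_neg ha)
  set U := G ∩ Φ ⁻¹' Set.Iio c
  have hx₀U : x₀ ∈ U := ⟨hx₀, EReal.coe_lt_coe_iff.mp hΦc⟩
  calc a + b ≤ -(c : EReal) + -(⨅ x ∈ U, (I x : EReal)) :=
        add_le_add (EReal.lt_neg_of_lt_neg hca).le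
          (hb.le.trans (EReal.neg_le_neg_iff.2 (iInf₂_le x₀ hx₀U)))
    _ ≤ -(c : EReal) + liminf (fun t : ℝ => (t : EReal) * ENNReal.log (μ t U)) (𝓝[>] 0) := by
        gcongr
        exact hlower U (hG.inter (isOpen_Iio.preimage hΦcont))
    _ ≤ _ := neg_add_liminf_mul_log_measure_le hΦcont.measurable Set.inter_subset_left
        fun _ hx => hx.2.le

/-- Varadhan lower bound: if `(μ_t)` satisfies the large deviation lower bound with rate
function `I`, `Φ` is bounded continuous and `G` is open, then
`liminf_{t→0⁺} t log ∫_G exp(−Φ/t) dμ_t ≥ −inf_G (Φ + I)`. -/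
theorem varadhan_lower_bound {X : Type*} [MetricSpace X] [MeasurableSpace X] [BorelSpace X]
    (μ : ℝ → Measure X) (hprob : ∀ t > (0:ℝ), IsProbabilityMeasure (μ t))
    (I : X → ℝ≥0∞)
    (hlower : ∀ G : Set X, IsOpen G →
      -(⨅ x ∈ G, (I x : EReal)) ≤
        Filter.liminf (fun t : ℝ => (t : EReal) * ENNReal.log (μ t G))
          (nhdsWithin 0 (Set.Ioi 0)))
    (Φ : X → ℝ) (hΦcont : Continuous Φ) (hΦbdd : ∃ M : ℝ, ∀ x, |Φ x| ≤ M)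
    (G : Set X) (hG : IsOpen G) :
    -(⨅ x ∈ G, ((Φ x : EReal) + (I x : EReal))) ≤
      Filter.liminf (fun t : ℝ =>
        (t : EReal) * ENNReal.log (∫⁻ x in G, ENNReal.ofReal (Real.exp (-Φ x / t)) ∂ (μ t)))
        (nhdsWithin 0 (Set.Ioi 0)) :=
  varadhan_lower_bound_general μ I hlower Φ hΦcont G hG
end

section
/- Let D ⊆ ℝ^m be open and let γ ∈ C([0,1],ℝ^m) be such that τ_D(γ) = τ_{D̄}(γ). Then the exit time functional τ_D is continuous at γ with respect to the sup-norm distance (as a map into [0,∞] with its order topology), and so is τ_{D̄}. -/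
open MeasureTheory
open scoped ENNReal unitInterval

noncomputable section

/-- Exit time from `D` of a continuous path `γ : [0,1] → ℝ^m`:
`τ_D(γ) = inf { t ∈ [0,1] : γ(t) ∉ D }`, with the convention `inf ∅ = +∞`. -/
def exitTime {m : ℕ} (D : Set (EuclideanSpace ℝ (Fin m)))
    (γ : C(unitInterval, EuclideanSpace ℝ (Fin m))) : ℝ≥0∞ :=
  ⨅ (t : unitInterval) (_ : γ t ∉ D), ENNReal.ofReal t

/-- The exit time is monotone in the set. -/
lemma exitTime_mono {m : ℕ} {D E : Set (EuclideanSpace ℝ (Fin m))} (hDE : D ⊆ E)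
    (γ : C(unitInterval, EuclideanSpace ℝ (Fin m))) : exitTime D γ ≤ exitTime E γ :=
  le_iInf fun t => le_iInf fun ht => iInf₂_le t (fun hm => ht (hDE hm))

/-- Lower semicontinuity of the exit time from an open set. -/
lemma exitTime_lsc {m : ℕ} {D : Set (EuclideanSpace ℝ (Fin m))} (hD : IsOpen D)
    (γ : C(unitInterval, EuclideanSpace ℝ (Fin m))) {a : ℝ≥0∞}
    (ha : a < exitTime D γ) : ∀ᶠ γ' in nhds γ, a < exitTime D γ' := by
  obtain ⟨a', haa', ha'⟩ := exists_between ha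
  set T : Set unitInterval := {t | ENNReal.ofReal ↑t ≤ a'} with hT
  have hTD : ∀ t ∈ T, γ t ∈ D := by
    intro t ht
    by_contra hmem
    exact absurd (le_trans (iInf₂_le t hmem) ht) (not_le.2 ha')
  have hTc : IsClosed T := isClosed_Iic.preimage
    (ENNReal.continuous_ofReal.comp continuous_subtype_val)
  have hK : IsCompact (γ '' T) := (hTc.isCompact).image γ.continuous
  have hKD : γ '' T ⊆ D := by rintro x ⟨t, ht, rfl⟩; exact hTD t ht
  obtain ⟨δ, hδ, hsub⟩ := hK.exists_thickening_subset_open hD hKD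
  refine Metric.eventually_nhds_iff.2 ⟨δ, hδ, fun γ' hγ' => ?_⟩
  refine lt_of_lt_of_le haa' (le_iInf fun t => le_iInf fun ht => ?_)
  by_contra hlt
  push_neg at hlt
  have htT : t ∈ T := le_of_lt hlt
  have : γ' t ∈ Metric.thickening δ (γ '' T) :=
    Metric.mem_thickening_iff.2 ⟨γ t, ⟨t, htT, rfl⟩,
      lt_of_le_of_lt (ContinuousMap.dist_apply_le_dist t) hγ'⟩
  exact ht (hsub this)

/-- Upper semicontinuity of the exit time from the closure. -/
lemma exitTime_closure_usc {m : ℕ} (D : Set (EuclideanSpace ℝ (Fin m)))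
    (γ : C(unitInterval, EuclideanSpace ℝ (Fin m))) {b : ℝ≥0∞}
    (hb : exitTime (closure D) γ < b) :
    ∀ᶠ γ' in nhds γ, exitTime (closure D) γ' < b := by
  rw [exitTime] at hb
  obtain ⟨t₀, ht₀⟩ := iInf_lt_iff.mp hb
  obtain ⟨hmem, hlt⟩ := iInf_lt_iff.mp ht₀
  obtain ⟨ε, hε, hball⟩ := Metric.isOpen_iff.mp isClosed_closure.isOpen_compl _ hmem
  refine Metric.eventually_nhds_iff.2 ⟨ε, hε, fun γ' hγ' => ?_⟩
  have : γ' t₀ ∉ closure D :=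
    hball (Metric.mem_ball.2 (lt_of_le_of_lt (ContinuousMap.dist_apply_le_dist t₀) hγ'))
  exact lt_of_le_of_lt (iInf₂_le t₀ this) hlt

/-- If `τ_D(γ) = τ_{D̄}(γ)` then both exit time functionals are continuous at `γ`
(for the sup-norm distance, with values in `[0,∞]`). -/
theorem exitTime_continuousAt_of_eq {m : ℕ}
    (D : Set (EuclideanSpace ℝ (Fin m))) (hD : IsOpen D)
    (γ : C(unitInterval, EuclideanSpace ℝ (Fin m)))
    (h : exitTime D γ = exitTime (closure D) γ) :
    ContinuousAt (exitTime D) γ ∧ ContinuousAt (exitTime (closure D)) γ := by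
  constructor
  · refine tendsto_order.2 ⟨fun a ha => exitTime_lsc hD γ ha, fun b hb => ?_⟩
    have hb' : exitTime (closure D) γ < b := h ▸ hb
    filter_upwards [exitTime_closure_usc D γ hb'] with γ' hγ'
    exact lt_of_le_of_lt (exitTime_mono subset_closure γ') hγ'
  · refine tendsto_order.2 ⟨fun a ha => ?_, fun b hb => exitTime_closure_usc D γ hb⟩
    have ha' : a < exitTime D γ := h ▸ ha
    filter_upwards [exitTime_lsc hD γ ha'] with γ' hγ'
    exact lt_of_lt_of_le hγ' (exitTime_mono subset_closure γ')

end
end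

section
/- Let D ⊆ ℝ^m be open and assume that for every z ∈ ∂D there exist a unit vector v ∈ ℝ^m and δ > 0 such that z + t·v ∉ D̄ for all t ∈ (0, δ] (this holds in particular when ∂D is of class C¹, v being the outward normal at z). Let K > 0 and let γ ∈ C([0,1],ℝ^m) satisfy γ(0) ∈ D, |γ(t) − γ(s)| ≤ K·√(t−s) for all 0 ≤ s ≤ t ≤ 1, and τ_D(γ) ≤ 1. Then for every ε > 0 there exists γ̃ ∈ C([0,1],ℝ^m) with γ̃(0) = γ(0), ‖γ − γ̃‖_∞ < ε, τ_D(γ̃) ≤ 1, and τ_D(γ̃) = τ_{D̄}(γ̃) (so that τ_D is continuous at γ̃); moreover, if γ is absolutely continuous with ∫₀¹ |γ'(t)|² dt < ∞, then γ̃ can be chosen absolutely continuous with ∫₀¹ |γ̃'(t)|² dt < ∞. -/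
open MeasureTheory
open scoped ENNReal unitInterval

noncomputable section

/-- `γ` is absolutely continuous with a square-integrable derivative. -/
def HasL2Deriv {m : ℕ} (γ : C(unitInterval, EuclideanSpace ℝ (Fin m))) : Prop :=
  ∃ g : ℝ → EuclideanSpace ℝ (Fin m), IntegrableOn g (Set.Icc (0:ℝ) 1) ∧
    (∫⁻ u in Set.Icc (0:ℝ) 1, ENNReal.ofReal (‖g u‖ ^ 2)) < ⊤ ∧
    ∀ t : unitInterval, γ t = γ 0 + ∫ u in (0:ℝ)..(t:ℝ), g u

/-!
Let `t0` be the first time `γ` leaves `D`, so that `z = γ t0 ∈ ∂D`, and let `v` point out of `D̄`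
at `z`. Run through `γ` slightly faster, so that `z` is reached at a time `s < t0` (hence `s < 1`),
then push the path out along the ray `z + ℝ₊ v`, which leaves `D̄` at once, and return to `γ`
along a segment. The new path stays in `D` before `s` and lies outside `D̄` just after `s`, so its
exit times from `D` and from `D̄` agree. Since the exit time from an open set is lower
semicontinuous and the exit time from a closed set is upper semicontinuous, `τ_D` is continuous
wherever the two agree. The modification is uniformly small by uniform continuity of `γ`, and it
keeps a square-integrable derivative, being made of a rescaled copy of `γ`, two affine pieces
and `γ` itself.
-/

open Set Filter Topology

section ExitTime

variable {m : ℕ} {D F : Set (EuclideanSpace ℝ (Fin m))} {γ : C(I, EuclideanSpace ℝ (Fin m))}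

theorem exitTime_le {t : I} (ht : γ t ∉ D) : exitTime D γ ≤ ENNReal.ofReal t :=
  iInf₂_le t ht

theorem le_exitTime {a : ℝ≥0∞} (h : ∀ t : I, γ t ∉ D → a ≤ ENNReal.ofReal t) :
    a ≤ exitTime D γ :=
  le_iInf₂ h

theorem exitTime_mono_s10 (h : D ⊆ F) : exitTime D γ ≤ exitTime F γ :=
  le_exitTime fun _ ht => exitTime_le fun hD => ht (h hD)

theorem exitTime_lt_iff {a : ℝ≥0∞} :
    exitTime D γ < a ↔ ∃ t : I, γ t ∉ D ∧ ENNReal.ofReal t < a := by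
  simp only [exitTime, iInf_lt_iff, exists_prop]

theorem ofReal_le_exitTime {s : ℝ} (h : ∀ t : I, (t : ℝ) < s → γ t ∈ D) :
    ENNReal.ofReal s ≤ exitTime D γ :=
  le_exitTime fun t ht => ENNReal.ofReal_le_ofReal (le_of_not_gt fun hts => ht (h t hts))

theorem exitTime_le_ofReal {s η : ℝ} (hs : 0 ≤ s) (hη : 0 < η) (hsη : s + η ≤ 1)
    (h : ∀ t : I, (t : ℝ) ∈ Ioc s (s + η) → γ t ∉ D) : exitTime D γ ≤ ENNReal.ofReal s := by
  refine le_of_forall_gt_imp_ge_of_dense fun a ha => ?_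
  obtain ⟨r, -, hsr, hra⟩ := ENNReal.lt_iff_exists_real_btwn.1 ha
  have hsr : s < r := (ENNReal.ofReal_lt_ofReal_iff_of_nonneg hs).1 hsr
  have ht : min r (s + η) ∈ Icc (0 : ℝ) 1 :=
    ⟨le_min (hs.trans hsr.le) (by linarith), (min_le_right _ _).trans hsη⟩
  calc exitTime D γ ≤ ENNReal.ofReal (min r (s + η)) :=
        exitTime_le (h ⟨_, ht⟩ ⟨lt_min hsr (by linarith), min_le_right _ _⟩)
    _ ≤ a := (ENNReal.ofReal_le_ofReal (min_le_left _ _)).trans hra.le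

theorem exists_first_exit (hD : IsOpen D) (hγ0 : γ 0 ∈ D) (hτ : exitTime D γ ≠ ⊤) :
    ∃ t0 : ℝ, t0 ∈ Ioc 0 1 ∧ IccExtend zero_le_one γ t0 ∈ frontier D ∧
      ∀ r < t0, IccExtend zero_le_one γ r ∈ D := by
  obtain ⟨t, hγt, -⟩ := exitTime_lt_iff.1 (lt_top_iff_ne_top.2 hτ)
  obtain ⟨t0, hγt0, hfirst⟩ := (hD.isClosed_compl.preimage γ.continuous).isCompact.exists_isLeast
    ⟨t, hγt⟩
  have hbefore : ∀ r < (t0 : ℝ), IccExtend zero_le_one γ r ∈ D := fun r hr => by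
    rcases le_or_gt r 0 with hr0 | hr0
    · rwa [IccExtend_of_le_left _ _ hr0]
    · rw [IccExtend_of_mem _ _ ⟨hr0.le, hr.le.trans t0.2.2⟩]
      exact not_not.1 fun hr' => hr.not_ge (hfirst hr')
  have ht0 : 0 < (t0 : ℝ) := lt_of_le_of_ne t0.2.1 fun h => hγt0 <| by
    rwa [show t0 = 0 from Subtype.ext h.symm]
  refine ⟨t0, ⟨ht0, t0.2.2⟩, ?_, hbefore⟩
  rw [hD.frontier_eq]
  refine ⟨mem_closure_of_tendsto ?_
    (eventually_nhdsWithin_of_forall (a := (t0 : ℝ)) (s := Iio _) hbefore), by rwa [IccExtend_val]⟩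
  exact (continuous_IccExtend_iff.2 γ.continuous).continuousAt.tendsto.mono_left
    nhdsWithin_le_nhds

theorem lowerSemicontinuous_exitTime (hD : IsOpen D) :
    LowerSemicontinuous (exitTime D : C(I, EuclideanSpace ℝ (Fin m)) → ℝ≥0∞) := by
  intro γ a ha
  obtain ⟨b, hab, hb⟩ := exists_between ha
  have hK : IsCompact {t : I | ENNReal.ofReal t ≤ b} :=
    (isClosed_le (ENNReal.continuous_ofReal.comp continuous_subtype_val)
      continuous_const).isCompact
  have hmaps : MapsTo γ {t : I | ENNReal.ofReal t ≤ b} D := fun t ht => by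
    by_contra hγt
    exact (exitTime_le hγt).trans ht |>.not_gt hb
  filter_upwards [ContinuousMap.eventually_mapsTo hK hD hmaps] with ζ hζ
  exact hab.trans_le <| le_exitTime fun t hζt => le_of_not_ge fun htb => hζt (hζ htb)

theorem upperSemicontinuous_exitTime (hF : IsClosed F) :
    UpperSemicontinuous (exitTime F : C(I, EuclideanSpace ℝ (Fin m)) → ℝ≥0∞) := by
  intro γ a ha
  obtain ⟨t, hγt, hta⟩ := exitTime_lt_iff.1 ha
  have hopen : IsOpen {ζ : C(I, EuclideanSpace ℝ (Fin m)) | ζ t ∈ Fᶜ} :=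
    hF.isOpen_compl.preimage (continuous_eval_const t)
  filter_upwards [hopen.mem_nhds hγt] with ζ hζt
  exact (exitTime_le hζt).trans_lt hta

theorem continuousAt_exitTime_of_eq_closure (hD : IsOpen D)
    (h : exitTime D γ = exitTime (closure D) γ) : ContinuousAt (exitTime D) γ := by
  refine continuousAt_iff_lower_upperSemicontinuousAt.2 ⟨lowerSemicontinuous_exitTime hD γ, ?_⟩
  intro a ha
  filter_upwards [upperSemicontinuous_exitTime isClosed_closure γ a (h ▸ ha)] with ζ hζ
  exact (exitTime_mono_s10 subset_closure).trans_lt hζ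

end ExitTime

def ramp (a η t : ℝ) : ℝ := max 0 (min ((t - a) / η) 1)

section Ramp

variable {a η t : ℝ}

theorem ramp_nonneg : 0 ≤ ramp a η t := le_max_left _ _

theorem ramp_le_one : ramp a η t ≤ 1 := max_le zero_le_one (min_le_right _ _)

theorem continuous_ramp : Continuous (ramp a η) := by
  unfold ramp; fun_prop

theorem ramp_of_le (hη : 0 < η) (ht : t ≤ a) : ramp a η t = 0 :=
  max_eq_left <| (min_le_left _ _).trans <| div_nonpos_of_nonpos_of_nonneg (by linarith) hη.le

theorem ramp_of_ge (hη : 0 < η) (ht : a + η ≤ t) : ramp a η t = 1 := by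
  rw [ramp, min_eq_right ((le_div_iff₀ hη).2 (by linarith)), max_eq_right zero_le_one]

theorem ramp_of_mem_Icc (hη : 0 < η) (ht : t ∈ Icc a (a + η)) : ramp a η t = (t - a) / η := by
  rw [ramp, min_eq_left ((div_le_one hη).2 (by linarith [ht.2])),
    max_eq_right (div_nonneg (by linarith [ht.1]) hη.le)]

end Ramp

section PushOut

variable {E : Type*} [NormedAddCommGroup E] [NormedSpace ℝ E]

/-- Run through `Γ` at speed `t0 / s` up to time `s`, when `Γ t0` is reached; move along the
ray `Γ t0 + ℝ₊ v` at speed `c` for a time `η`; return to `Γ` along a segment within a further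
time `η`, and follow `Γ` from time `s + 2η` on. -/
def pushOut (Γ : ℝ → E) (s t0 η c : ℝ) (v : E) (t : ℝ) : E :=
  (1 - ramp (s + η) η t) • (Γ (min (t0 / s * t) t0) + (c * η * ramp s η t) • v)
    + ramp (s + η) η t • Γ (max t (s + 2 * η))

variable {Γ : ℝ → E} {s t0 η c t : ℝ} {v : E}

theorem continuous_pushOut (hΓ : Continuous Γ) : Continuous (pushOut Γ s t0 η c v) := by
  unfold pushOut
  have := continuous_ramp (a := s) (η := η)
  have := continuous_ramp (a := s + η) (η := η)
  fun_prop

theorem pushOut_of_le (hs : 0 < s) (hst : s ≤ t0) (hη : 0 < η) (ht : t ≤ s) :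
    pushOut Γ s t0 η c v t = Γ (t0 / s * t) := by
  have hle : t0 / s * t ≤ t0 := by
    calc t0 / s * t ≤ t0 / s * s := by gcongr; exact div_nonneg (hs.le.trans hst) hs.le
      _ = t0 := div_mul_cancel₀ _ hs.ne'
  simp [pushOut, ramp_of_le hη ht, ramp_of_le hη (show t ≤ s + η by linarith), min_eq_left hle]

theorem pushOut_of_mem_Icc (hs : 0 < s) (hst : s ≤ t0) (ht : t ∈ Icc s (s + 2 * η)) :
    pushOut Γ s t0 η c v t = (1 - ramp (s + η) η t) • (Γ t0 + (c * η * ramp s η t) • v)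
      + ramp (s + η) η t • Γ (s + 2 * η) := by
  have hge : t0 ≤ t0 / s * t := by
    calc t0 = t0 / s * s := (div_mul_cancel₀ _ hs.ne').symm
      _ ≤ t0 / s * t := by gcongr; exacts [div_nonneg (hs.le.trans hst) hs.le, ht.1]
  rw [pushOut, min_eq_right hge, max_eq_right ht.2]

theorem pushOut_of_mem_Icc_left (hs : 0 < s) (hst : s ≤ t0) (hη : 0 < η)
    (ht : t ∈ Icc s (s + η)) :
    pushOut Γ s t0 η c v t = Γ t0 + (c * (t - s)) • v := by
  rw [pushOut_of_mem_Icc hs hst ⟨ht.1, by linarith [ht.2]⟩, ramp_of_le hη ht.2,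
    ramp_of_mem_Icc hη ht]
  field_simp
  simp

theorem pushOut_of_mem_Icc_right (hs : 0 < s) (hst : s ≤ t0) (hη : 0 < η)
    (ht : t ∈ Icc (s + η) (s + 2 * η)) :
    pushOut Γ s t0 η c v t = Γ t0 + (c * η) • v
      + (t - (s + η)) • η⁻¹ • (Γ (s + 2 * η) - (Γ t0 + (c * η) • v)) := by
  rw [pushOut_of_mem_Icc hs hst ⟨by linarith [ht.1], ht.2⟩,
    ramp_of_ge hη ht.1, ramp_of_mem_Icc hη (by convert ht using 2; ring), smul_smul]
  module

theorem pushOut_of_ge (hη : 0 < η) (ht : s + 2 * η ≤ t) : pushOut Γ s t0 η c v t = Γ t := by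
  simp [pushOut, ramp_of_ge hη (show s + η + η ≤ t by linarith), max_eq_left ht]

theorem norm_pushOut_sub_le {r : ℝ} (hs : 0 < s) (hst : s ≤ t0) (hη : 0 < η)
    (ht0 : t0 ≤ s + 3 * η) (hc : 0 ≤ c) (hΓ : ∀ p q, |p - q| ≤ 3 * η → ‖Γ p - Γ q‖ ≤ r)
    (ht : 0 ≤ t) : ‖pushOut Γ s t0 η c v t - Γ t‖ ≤ r + c * η * ‖v‖ := by
  have hr : 0 ≤ r := by simpa using hΓ 0 0 (by simp; positivity)
  have hcηv : 0 ≤ c * η * ‖v‖ := by positivity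
  rcases le_or_gt t s with hts | hts
  · rw [pushOut_of_le hs hst hη hts]
    refine (hΓ _ _ ?_).trans (le_add_of_nonneg_right hcηv)
    have : t0 / s * t - t = t * (t0 - s) / s := by field_simp
    rw [this, abs_of_nonneg (by have := sub_nonneg.2 hst; positivity), div_le_iff₀ hs]
    nlinarith
  rcases le_or_gt t (s + 2 * η) with hts' | hts'
  · rw [pushOut_of_mem_Icc hs hst ⟨hts.le, hts'⟩, ← dist_eq_norm, ← Metric.mem_closedBall]
    refine convex_closedBall _ _ ?_ ?_ (sub_nonneg.2 ramp_le_one) ramp_nonneg (by ring)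
    · rw [Metric.mem_closedBall, dist_eq_norm, add_sub_right_comm]
      refine (norm_add_le _ _).trans (add_le_add (hΓ _ _ (abs_le.2 ⟨by linarith, by linarith⟩)) ?_)
      rw [norm_smul, Real.norm_of_nonneg (mul_nonneg (by positivity) ramp_nonneg)]
      exact mul_le_mul_of_nonneg_right
        (mul_le_of_le_one_right (by positivity) ramp_le_one) (norm_nonneg _)
    · rw [Metric.mem_closedBall, dist_eq_norm]
      exact (hΓ _ _ (abs_le.2 ⟨by linarith, by linarith⟩)).trans (le_add_of_nonneg_right hcηv)
  · rw [pushOut_of_ge hη hts'.le, sub_self, norm_zero]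
    positivity

theorem pushOut_mem_of_lt {D : Set E} (hs : 0 < s) (hst : s ≤ t0) (hη : 0 < η)
    (hΓ : ∀ r < t0, Γ r ∈ D) (ht : t < s) : pushOut Γ s t0 η c v t ∈ D := by
  rw [pushOut_of_le hs hst hη ht.le]
  refine hΓ _ ?_
  calc t0 / s * t < t0 / s * s := by gcongr; exact div_pos (hs.trans_le hst) hs
    _ = t0 := div_mul_cancel₀ _ hs.ne'

theorem pushOut_notMem_of_mem_Ioc {A : Set E} (hs : 0 < s) (hst : s ≤ t0) (hη : 0 < η)
    (hc : 0 < c) (hray : ∀ τ ∈ Ioc 0 (c * η), Γ t0 + τ • v ∉ A) (ht : t ∈ Ioc s (s + η)) :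
    pushOut Γ s t0 η c v t ∉ A := by
  rw [pushOut_of_mem_Icc_left hs hst hη (Ioc_subset_Icc_self ht)]
  exact hray _ ⟨mul_pos hc (by linarith [ht.1]), by gcongr; linarith [ht.2]⟩

end PushOut

theorem MeasureTheory.MemLp.intervalIntegrable_of_mem_Icc {E : Type*} [NormedAddCommGroup E]
    {g : ℝ → E} {a b : ℝ} (hg : MemLp g 2 (volume.restrict (Icc a b))) {x y : ℝ}
    (hx : x ∈ Icc a b) (hy : y ∈ Icc a b) : IntervalIntegrable g volume x y :=
  intervalIntegrable_iff.2 <| IntegrableOn.mono_set (hg.integrable one_le_two)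
    (uIoc_subset_uIcc.trans (uIcc_subset_Icc hx hy))

section L2Deriv

variable {E : Type*} [NormedAddCommGroup E] [NormedSpace ℝ E]

def HasL2DerivOn (f : ℝ → E) (a b : ℝ) : Prop :=
  ∃ g : ℝ → E, MemLp g 2 (volume.restrict (Icc a b)) ∧ ∀ t ∈ Icc a b, f t = f a + ∫ u in a..t, g u

variable {f f' : ℝ → E} {a b c : ℝ}

theorem HasL2DerivOn.congr (h : HasL2DerivOn f a b) (hff' : EqOn f f' (Icc a b)) :
    HasL2DerivOn f' a b := by
  obtain ⟨g, hg, hfg⟩ := h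
  refine ⟨g, hg, fun t ht => ?_⟩
  rw [← hff' ht, ← hff' ⟨le_rfl, ht.1.trans ht.2⟩]
  exact hfg t ht

theorem hasL2DerivOn_add_smul [CompleteSpace E] (x w : E) (a b : ℝ) :
    HasL2DerivOn (fun t => x + (t - a) • w) a b :=
  ⟨fun _ => w, memLp_const w, fun t _ => by simp [intervalIntegral.integral_const]⟩

theorem HasL2DerivOn.mono (h : HasL2DerivOn f a b) {a' b' : ℝ} (ha : a ≤ a') (hb : b' ≤ b) :
    HasL2DerivOn f a' b' := by
  obtain ⟨g, hg, hfg⟩ := h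
  refine ⟨g, hg.mono_measure (Measure.restrict_mono (Icc_subset_Icc ha hb) le_rfl), fun t ht => ?_⟩
  have ha' : a' ∈ Icc a b := ⟨ha, ht.1.trans (ht.2.trans hb)⟩
  have ht' : t ∈ Icc a b := ⟨ha.trans ht.1, ht.2.trans hb⟩
  have hleft : a ∈ Icc a b := ⟨le_rfl, ha.trans ha'.2⟩
  rw [hfg t ht', hfg a' ha', add_assoc, intervalIntegral.integral_add_adjacent_intervals
    (hg.intervalIntegrable_of_mem_Icc hleft ha') (hg.intervalIntegrable_of_mem_Icc ha' ht')]

theorem HasL2DerivOn.append (h₁ : HasL2DerivOn f a b) (h₂ : HasL2DerivOn f b c) (hab : a ≤ b) :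
    HasL2DerivOn f a c := by
  classical
  obtain ⟨g₁, hg₁, hfg₁⟩ := h₁
  obtain ⟨g₂, hg₂, hfg₂⟩ := h₂
  set g := (Iic b).piecewise g₁ g₂
  have hg : MemLp g 2 (volume.restrict (Icc a c)) := by
    refine MemLp.piecewise measurableSet_Iic ?_ ?_
    · rw [Measure.restrict_restrict measurableSet_Iic]
      refine hg₁.mono_measure (Measure.restrict_mono ?_ le_rfl)
      exact fun _ hu => ⟨hu.2.1, hu.1⟩
    · rw [Measure.restrict_restrict measurableSet_Iic.compl]
      refine hg₂.mono_measure (Measure.restrict_mono ?_ le_rfl)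
      exact fun _ hu => ⟨(not_le.1 (show _ ∉ Iic b from hu.1)).le, hu.2.2⟩
  have hg₁g {t : ℝ} (ht : a ≤ t) (htb : t ≤ b) : ∫ u in a..t, g u = ∫ u in a..t, g₁ u := by
    refine intervalIntegral.integral_congr fun u hu => ?_
    rw [uIcc_of_le ht] at hu
    exact piecewise_eq_of_mem (Iic b) g₁ g₂ (mem_Iic.2 (hu.2.trans htb))
  refine ⟨g, hg, fun t ht => ?_⟩
  rcases le_or_gt t b with htb | hbt
  · rw [hfg₁ t ⟨ht.1, htb⟩, hg₁g ht.1 htb]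
  have hbc : b ∈ Icc a c := ⟨hab, hbt.le.trans ht.2⟩
  have hg₂g : ∫ u in b..t, g u = ∫ u in b..t, g₂ u := by
    refine intervalIntegral.integral_congr_ae (Eventually.of_forall fun u hu => ?_)
    rw [uIoc_of_le hbt.le] at hu
    exact piecewise_eq_of_notMem (Iic b) g₁ g₂ (notMem_Iic.2 hu.1)
  rw [← intervalIntegral.integral_add_adjacent_intervals
      (hg.intervalIntegrable_of_mem_Icc ⟨le_rfl, ht.1.trans ht.2⟩ hbc)
      (hg.intervalIntegrable_of_mem_Icc hbc ht),
    hfg₂ t ⟨hbt.le, ht.2⟩, hfg₁ b ⟨hab, le_rfl⟩, add_assoc, hg₁g hab le_rfl, hg₂g]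

theorem HasL2DerivOn.comp_mul (h : HasL2DerivOn f (c * a) (c * b)) (hc : 0 < c) :
    HasL2DerivOn (fun t => f (c * t)) a b := by
  obtain ⟨g, hg, hfg⟩ := h
  have hscale : MeasurePreserving (c * ·) (volume.restrict (Icc a b))
      (ENNReal.ofReal |c⁻¹| • volume.restrict (Icc (c * a) (c * b))) := by
    have := (MeasurePreserving.mk (measurable_const_mul c) (Real.map_volume_mul_left hc.ne')
      ).restrict_preimage (measurableSet_Icc (a := c * a) (b := c * b))
    rwa [preimage_const_mul_Icc₀ _ _ hc, mul_div_cancel_left₀ _ hc.ne',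
      mul_div_cancel_left₀ _ hc.ne', Measure.restrict_smul] at this
  refine ⟨fun u => c • g (c * u),
    ((hg.smul_measure ENNReal.ofReal_ne_top).comp_measurePreserving hscale).const_smul c,
    fun t ht => ?_⟩
  simp only [intervalIntegral.integral_smul]
  rw [intervalIntegral.smul_integral_comp_mul_left,
    hfg (c * t) ⟨by gcongr; exact ht.1, by gcongr; exact ht.2⟩]

end L2Deriv

section PushOutPath

variable {E : Type*} [NormedAddCommGroup E] [NormedSpace ℝ E] {Γ : ℝ → E} {s t0 η c : ℝ} {v : E}

theorem hasL2DerivOn_pushOut [CompleteSpace E] (h : HasL2DerivOn Γ 0 1) (hs : 0 < s)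
    (hst : s ≤ t0) (ht0 : t0 ≤ 1) (hη : 0 < η) : HasL2DerivOn (pushOut Γ s t0 η c v) 0 1 := by
  have h₁ : HasL2DerivOn (pushOut Γ s t0 η c v) 0 s := by
    have : HasL2DerivOn Γ (t0 / s * 0) (t0 / s * s) := by
      rw [mul_zero, div_mul_cancel₀ _ hs.ne']
      exact h.mono le_rfl ht0
    exact (this.comp_mul (div_pos (hs.trans_le hst) hs)).congr
      fun t ht => (pushOut_of_le hs hst hη ht.2).symm
  have h₂ : HasL2DerivOn (pushOut Γ s t0 η c v) s (s + η) :=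
    (hasL2DerivOn_add_smul (Γ t0) (c • v) s (s + η)).congr fun t ht => by
      rw [pushOut_of_mem_Icc_left hs hst hη ht, mul_comm, mul_smul]
  have h₃ : HasL2DerivOn (pushOut Γ s t0 η c v) (s + η) (s + 2 * η) :=
    (hasL2DerivOn_add_smul _ _ _ _).congr fun t ht => (pushOut_of_mem_Icc_right hs hst hη ht).symm
  have h₄ : HasL2DerivOn (pushOut Γ s t0 η c v) (s + 2 * η) 1 :=
    (h.mono (by positivity) le_rfl).congr fun t ht => (pushOut_of_ge hη ht.1).symm
  exact ((h₁.append h₂ hs.le).append h₃ (by linarith)).append h₄ (by linarith)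

def pushOutPath (γ : C(I, E)) (s t0 η c : ℝ) (v : E) : C(I, E) :=
  ContinuousMap.restrict I ⟨pushOut (IccExtend zero_le_one γ) s t0 η c v,
    continuous_pushOut (continuous_IccExtend_iff.2 γ.continuous)⟩

variable {γ : C(I, E)}

theorem pushOutPath_apply (t : I) :
    pushOutPath γ s t0 η c v t = pushOut (IccExtend zero_le_one γ) s t0 η c v t :=
  rfl

theorem pushOutPath_zero (hs : 0 < s) (hst : s ≤ t0) (hη : 0 < η) :
    pushOutPath γ s t0 η c v 0 = γ 0 := by
  rw [pushOutPath_apply, Icc.coe_zero, pushOut_of_le hs hst hη hs.le, mul_zero]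
  exact IccExtend_left _ _

theorem dist_pushOutPath_le {r : ℝ} (hs : 0 < s) (hst : s ≤ t0) (hη : 0 < η)
    (ht0 : t0 ≤ s + 3 * η) (hc : 0 ≤ c)
    (hγ : ∀ p q, |p - q| ≤ 3 * η → ‖IccExtend zero_le_one γ p - IccExtend zero_le_one γ q‖ ≤ r) :
    dist γ (pushOutPath γ s t0 η c v) ≤ r + c * η * ‖v‖ := by
  have hbound (t : I) := norm_pushOut_sub_le hs hst hη ht0 hc hγ t.2.1 (v := v)
  refine (ContinuousMap.dist_le ((norm_nonneg _).trans (hbound 0))).2 fun t => ?_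
  rw [dist_comm, dist_eq_norm, pushOutPath_apply, ← IccExtend_val zero_le_one γ t]
  exact hbound t

end PushOutPath

theorem memLp_two_iff_integrable_and_lintegral_lt_top {α E : Type*} [MeasurableSpace α]
    [NormedAddCommGroup E] {μ : Measure α} [IsFiniteMeasure μ] {g : α → E} :
    MemLp g 2 μ ↔ Integrable g μ ∧ ∫⁻ x, ENNReal.ofReal (‖g x‖ ^ 2) ∂μ < ⊤ := by
  refine ⟨fun h => ⟨h.integrable one_le_two,
    ((memLp_two_iff_integrable_sq_norm h.1).1 h).lintegral_lt_top⟩, fun ⟨hi, hl⟩ => ?_⟩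
  refine (memLp_two_iff_integrable_sq_norm hi.1).2 ⟨hi.1.norm.pow 2, ?_⟩
  exact (hasFiniteIntegral_iff_ofReal (Eventually.of_forall fun x => by positivity)).2 hl

section Euclidean

variable {m : ℕ} {D : Set (EuclideanSpace ℝ (Fin m))} {γ : C(I, EuclideanSpace ℝ (Fin m))}

theorem HasL2Deriv.hasL2DerivOn_IccExtend (h : HasL2Deriv γ) :
    HasL2DerivOn (IccExtend zero_le_one γ) 0 1 := by
  obtain ⟨g, hgi, hgl, hγg⟩ := h
  refine ⟨g, memLp_two_iff_integrable_and_lintegral_lt_top.2 ⟨hgi, hgl⟩, fun t ht => ?_⟩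
  rw [IccExtend_of_mem _ _ ht, IccExtend_left]
  exact hγg ⟨t, ht⟩

theorem HasL2DerivOn.hasL2Deriv_restrict {F : C(ℝ, EuclideanSpace ℝ (Fin m))}
    (h : HasL2DerivOn F 0 1) : HasL2Deriv (F.restrict I) := by
  obtain ⟨g, hg, hFg⟩ := h
  obtain ⟨hgi, hgl⟩ := memLp_two_iff_integrable_and_lintegral_lt_top.1 hg
  exact ⟨g, hgi, hgl, fun t => hFg t t.2⟩

theorem hasL2Deriv_pushOutPath (h : HasL2Deriv γ) {s t0 η c : ℝ} {v : EuclideanSpace ℝ (Fin m)}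
    (hs : 0 < s) (hst : s ≤ t0) (ht0 : t0 ≤ 1) (hη : 0 < η) :
    HasL2Deriv (pushOutPath γ s t0 η c v) :=
  (hasL2DerivOn_pushOut h.hasL2DerivOn_IccExtend hs hst ht0 hη).hasL2Deriv_restrict

theorem exitTime_pushOutPath {s t0 η c : ℝ} {v : EuclideanSpace ℝ (Fin m)} (hs : 0 < s)
    (hst : s ≤ t0) (hη : 0 < η) (hsη : s + η ≤ 1) (hc : 0 < c)
    (hbefore : ∀ r < t0, IccExtend zero_le_one γ r ∈ D)
    (hray : ∀ τ ∈ Ioc 0 (c * η), IccExtend zero_le_one γ t0 + τ • v ∉ closure D) :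
    exitTime D (pushOutPath γ s t0 η c v) = ENNReal.ofReal s ∧
      exitTime (closure D) (pushOutPath γ s t0 η c v) = ENNReal.ofReal s := by
  have hlow : ENNReal.ofReal s ≤ exitTime D (pushOutPath γ s t0 η c v) :=
    ofReal_le_exitTime fun t ht => pushOut_mem_of_lt hs hst hη hbefore ht
  have hup : exitTime (closure D) (pushOutPath γ s t0 η c v) ≤ ENNReal.ofReal s :=
    exitTime_le_ofReal hs.le hη hsη fun t ht => pushOut_notMem_of_mem_Ioc hs hst hη hc hray ht
  have hmono := exitTime_mono_s10 (γ := pushOutPath γ s t0 η c v) (subset_closure (s := D))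
  exact ⟨le_antisymm (hmono.trans hup) hlow, le_antisymm hup (hlow.trans hmono)⟩

end Euclidean

theorem exists_approx_continuity_point_exitTime_general {m : ℕ}
    (D : Set (EuclideanSpace ℝ (Fin m))) (hD : IsOpen D)
    (hbd : ∀ z ∈ frontier D, ∃ v : EuclideanSpace ℝ (Fin m), ‖v‖ = 1 ∧
      ∃ δ > (0:ℝ), ∀ t ∈ Set.Ioc (0:ℝ) δ, z + t • v ∉ closure D)
    (γ : C(unitInterval, EuclideanSpace ℝ (Fin m))) (hγ0 : γ 0 ∈ D)
    (hτ : exitTime D γ ≤ 1) (ε : ℝ) (hε : 0 < ε) :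
    ∃ γ' : C(unitInterval, EuclideanSpace ℝ (Fin m)),
      γ' 0 = γ 0 ∧ dist γ γ' < ε ∧ exitTime D γ' ≤ 1 ∧
      exitTime D γ' = exitTime (closure D) γ' ∧ ContinuousAt (exitTime D) γ' ∧
      (HasL2Deriv γ → HasL2Deriv γ') := by
  obtain ⟨t0, ⟨ht0, ht01⟩, hfr, hbefore⟩ :=
    exists_first_exit hD hγ0 (ne_top_of_le_ne_top ENNReal.one_ne_top hτ)
  obtain ⟨v, hv, δ, hδ, hray⟩ := hbd _ hfr
  obtain ⟨ρ, hρ, hγρ⟩ := Metric.uniformContinuous_iff.1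
    ((CompactSpace.uniformContinuous_of_continuous γ.continuous).comp
      (LipschitzWith.projIcc zero_le_one).uniformContinuous) (ε / 4) (by positivity)
  obtain ⟨η, hη, hη6, hηε, hηρ⟩ : ∃ η > 0, η ≤ 1 / 6 ∧ η ≤ ε / 4 ∧ η ≤ ρ / 4 :=
    ⟨min (1 / 6) (min (ε / 4) (ρ / 4)), by positivity, min_le_left _ _,
      (min_le_right _ _).trans (min_le_left _ _), (min_le_right _ _).trans (min_le_right _ _)⟩
  set s := t0 * (1 - 3 * η)
  set c := min 1 δ
  have hs : 0 < s := mul_pos ht0 (by linarith)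
  have hst : s ≤ t0 := mul_le_of_le_one_right ht0.le (by linarith)
  have hc : 0 < c := lt_min one_pos hδ
  have hcη : c * η ≤ δ := (mul_le_of_le_one_right hc.le (by linarith)).trans (min_le_right _ _)
  obtain ⟨hexit, hexit_closure⟩ := exitTime_pushOutPath (v := v) hs hst hη (by nlinarith) hc
    hbefore fun τ hτ => hray τ ⟨hτ.1, hτ.2.trans hcη⟩
  have hdist := dist_pushOutPath_le (v := v) hs hst hη (by nlinarith) hc.le
    fun p q hpq => by
      rw [← dist_eq_norm]
      exact (hγρ (by rw [Real.dist_eq]; linarith)).le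
  refine ⟨pushOutPath γ s t0 η c v, pushOutPath_zero hs hst hη, ?_,
    hexit ▸ ENNReal.ofReal_le_one.2 (by nlinarith), hexit.trans hexit_closure.symm,
    continuousAt_exitTime_of_eq_closure hD (hexit.trans hexit_closure.symm),
    fun h => hasL2Deriv_pushOutPath h hs hst ht01 hη⟩
  rw [hv, mul_one] at hdist
  linarith [mul_le_of_le_one_left hη.le (min_le_left 1 δ)]

/-- Approximation of a Hölder path exiting `D` by a path at which the exit time functional
is continuous. The boundary condition holds in particular when `∂D` is of class `C¹`,
`v` being the outward normal. -/
theorem exists_approx_continuity_point_exitTime {m : ℕ}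
    (D : Set (EuclideanSpace ℝ (Fin m))) (hD : IsOpen D)
    (hbd : ∀ z ∈ frontier D, ∃ v : EuclideanSpace ℝ (Fin m), ‖v‖ = 1 ∧
      ∃ δ > (0:ℝ), ∀ t ∈ Set.Ioc (0:ℝ) δ, z + t • v ∉ closure D)
    (K : ℝ) (hK : 0 < K)
    (γ : C(unitInterval, EuclideanSpace ℝ (Fin m))) (hγ0 : γ 0 ∈ D)
    (hHolder : ∀ s t : unitInterval, s ≤ t →
      ‖γ t - γ s‖ ≤ K * Real.sqrt ((t : ℝ) - (s : ℝ)))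
    (hτ : exitTime D γ ≤ 1) (ε : ℝ) (hε : 0 < ε) :
    ∃ γ' : C(unitInterval, EuclideanSpace ℝ (Fin m)),
      γ' 0 = γ 0 ∧ dist γ γ' < ε ∧ exitTime D γ' ≤ 1 ∧
      exitTime D γ' = exitTime (closure D) γ' ∧ ContinuousAt (exitTime D) γ' ∧
      (HasL2Deriv γ → HasL2Deriv γ') :=
  exists_approx_continuity_point_exitTime_general D hD hbd γ hγ0 hτ ε hε
end
end
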